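/- arXiv:2006.11131 — 2 statements merged into one kernel-verified Lean document; each statement's English description precedes it below -/
import Mathlib

section
/- For every real x ≥ 0 and every integer n ≥ 1, the second central moment satisfies e^{-2-nx}·Σ_{k₁=0}^∞ Σ_{k₂=0}^∞ ((nx/2 + 1)^{k₁+k₂}/(k₁!·k₂!))·((k₁+k₂)/n − x)² = x/n + 6/n²; that is, G_n((e₁ − x)²; x) = x/n + 6/n² for the operator attached to the multiple Sheffer polynomials (x+1)^{k₁+k₂}, where (e₁ − x)² denotes the function s ↦ (s − x)². -/
/-!
Grouping the terms by `m = k₁ + k₂`, the binomial theorem turns the weights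
`y ^ (k₁ + k₂) / (k₁! k₂!)` into `(2y) ^ m / m!`: `G_n(f; x)` is the expectation of `f (N / n)` for
a Poisson variable `N` of parameter `r = 2y = nx + 2`, the sum of two independent Poisson variables
of parameter `y`. The second moment of `N` about `nx` is `Var N + (E N - nx)² = (nx + 2) + 4`, and
dividing by `n²` gives `x / n + 6 / n²`.
-/

open Finset Nat

theorem HasSum.of_sum_antidiagonal_of_nonneg {A : Type*} [AddCommMonoid A] [HasAntidiagonal A]
    {f : A × A → ℝ} {s : ℝ} (hf : 0 ≤ f) (h : HasSum (fun n ↦ ∑ p ∈ antidiagonal n, f p) s) :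
    HasSum f s := by
  let e := HasAntidiagonal.sigmaAntidiagonalEquivProd (A := A)
  have hfiber (n : A) : HasSum (fun p : antidiagonal n ↦ (f ∘ e) ⟨n, p⟩)
      (∑ p ∈ antidiagonal n, f p) :=
    (antidiagonal n).hasSum f
  have hsummable : Summable (f ∘ e) :=
    (summable_sigma_of_nonneg fun _ ↦ hf _).2
      ⟨fun n ↦ (hfiber n).summable, (funext fun n ↦ (hfiber n).tsum_eq) ▸ h.summable⟩
  rw [← e.hasSum_iff, ← (hsummable.hasSum.sigma hfiber).unique h]
  exact hsummable.hasSum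

theorem sum_antidiagonal_pow_div_factorial_mul {K : Type*} [Field K] [CharZero K]
    (a b : K) (n : ℕ) :
    ∑ p ∈ antidiagonal n, a ^ p.1 / p.1 ! * (b ^ p.2 / p.2 !) = (a + b) ^ n / n ! := by
  rw [(Commute.all a b).add_pow', Finset.sum_div]
  refine Finset.sum_congr rfl fun p hp ↦ ?_
  rw [← mem_antidiagonal.mp hp, nsmul_eq_mul, Nat.cast_add_choose]
  field_simp [(p.1 + p.2).factorial_ne_zero]

theorem Real.hasSum_pow_div_factorial (r : ℝ) : HasSum (fun k ↦ r ^ k / k !) (Real.exp r) := by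
  rw [Real.exp_eq_exp_ℝ]
  exact NormedSpace.expSeries_div_hasSum_exp r

/-- The Stein identity `E[N f(N)] = r E[f(N + 1)]` of the Poisson law. -/
theorem hasSum_mul_pow_div_factorial_of_hasSum_succ {f : ℕ → ℝ} {r s : ℝ}
    (h : HasSum (fun k ↦ f (k + 1) * r ^ k / k !) s) :
    HasSum (fun k ↦ k * f k * r ^ k / k !) (r * s) := by
  have hshift : (fun k : ℕ ↦ ((k + 1 : ℕ) : ℝ) * f (k + 1) * r ^ (k + 1) / (k + 1)!) =
      fun k ↦ r * (f (k + 1) * r ^ k / k !) := by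
    funext k
    rw [factorial_succ]
    push_cast
    field_simp
    ring
  rw [← hasSum_nat_add_iff' 1, range_one, sum_singleton, cast_zero, zero_mul, zero_mul,
    zero_div, sub_zero, hshift]
  exact h.mul_left r

theorem Real.hasSum_sub_sq_mul_pow_div_factorial (r c : ℝ) :
    HasSum (fun k : ℕ ↦ ((k : ℝ) - c) ^ 2 * r ^ k / k !) ((r + (r - c) ^ 2) * Real.exp r) := by
  have h0 := Real.hasSum_pow_div_factorial r
  have h1 : HasSum (fun k : ℕ ↦ (k : ℝ) * 1 * r ^ k / k !) (r * Real.exp r) :=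
    hasSum_mul_pow_div_factorial_of_hasSum_succ (by simpa using h0)
  have h2 : HasSum (fun k : ℕ ↦ (k : ℝ) * (k - 1) * r ^ k / k !) (r * (r * Real.exp r)) :=
    hasSum_mul_pow_div_factorial_of_hasSum_succ (by simpa using h1)
  -- `(k - c)² = k (k - 1) + (1 - 2c) k + c²`
  convert (h2.add (h1.mul_left (1 - 2 * c))).add (h0.mul_left (c ^ 2)) using 1
  · funext k
    ring
  · ring

/-- the second central moment `G_n((e₁ − x)²;x) = x/n + 6/n²` for the
operator attached to the multiple Sheffer polynomials `(x+1)^{k₁+k₂}`. -/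
theorem Gxk_central_moment (x : ℝ) (hx : 0 ≤ x) (n : ℕ) (hn : 1 ≤ n) :
    Real.exp (-2 - n * x) *
        ∑' k : ℕ × ℕ, (n * x / 2 + 1) ^ (k.1 + k.2) / (k.1.factorial * k.2.factorial) *
          ((k.1 + k.2 : ℝ) / n - x) ^ 2 =
      x / n + 6 / (n : ℝ) ^ 2 := by
  have hn0 : (n : ℝ) ≠ 0 := Nat.cast_ne_zero.mpr (by omega)
  set y : ℝ := n * x / 2 + 1 with hy
  have hfiber (m : ℕ) :
      ∑ p ∈ antidiagonal m, y ^ (p.1 + p.2) / (p.1 ! * p.2 !) * ((p.1 + p.2 : ℝ) / n - x) ^ 2 =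
        ((m : ℝ) - n * x) ^ 2 * (y + y) ^ m / m ! / n ^ 2 := by
    calc _ = ∑ p ∈ antidiagonal m, y ^ p.1 / p.1 ! * (y ^ p.2 / p.2 !) * ((m : ℝ) / n - x) ^ 2 :=
          sum_congr rfl fun p hp ↦ by
            rw [← mem_antidiagonal.mp hp, pow_add, cast_add, mul_div_mul_comm]
      _ = (y + y) ^ m / m ! * ((m : ℝ) / n - x) ^ 2 := by
          rw [← sum_mul, sum_antidiagonal_pow_div_factorial_mul]
      _ = _ := by
          field_simp
  have hpairs : HasSum
      (fun k : ℕ × ℕ ↦ y ^ (k.1 + k.2) / (k.1 ! * k.2 !) * ((k.1 + k.2 : ℝ) / n - x) ^ 2)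
      ((y + y + (y + y - n * x) ^ 2) * Real.exp (y + y) / n ^ 2) :=
    HasSum.of_sum_antidiagonal_of_nonneg (fun k ↦ by positivity)
      (by simpa only [hfiber] using
        (Real.hasSum_sub_sq_mul_pow_div_factorial (y + y) (n * x)).div_const _)
  have hexp : Real.exp (-2 - n * x) * Real.exp (y + y) = 1 := by
    rw [← Real.exp_add, hy]
    convert Real.exp_zero using 2
    ring
  rw [hpairs.tsum_eq, mul_div_assoc', ← mul_assoc, mul_right_comm, hexp, one_mul, hy]
  field_simp
  ring
end

section
/- For every real x ≥ 0 and every integer n ≥ 1, (e^{-nx}/2)·Σ_{k₁,k₂≥0, k₁+k₂≥1} ((k₁+k₂)·(nx/2)^{k₁+k₂-1}/(k₁!·k₂!))·((k₁+k₂)/n) = x + 1/n; that is, G_n(e₁;x) = x + 1/n for the operator attached to the multiple Sheffer polynomials (k₁+k₂)·x^{k₁+k₂-1}. -/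
/-!
Grouping the double series along the antidiagonals `k₁ + k₂ = m` turns it into a single series:
the summand depends on `(k₁, k₂)` only through `m` and `1 / (k₁! k₂!)`, and
`∑_{k₁ + k₂ = m} 1 / (k₁! k₂!) = 2ᵐ / m!`. With `z = n x` this leaves
`(2 / n) ∑ₘ m² zᵐ⁻¹ / m! = (2 / n) (1 + z) eᶻ`, and multiplying by `e⁻ᶻ / 2` gives `x + 1 / n`.
-/

open Finset Nat Real

theorem hasSum_prod_of_hasSum_sum_antidiagonal {A : Type*} [AddMonoid A] [HasAntidiagonal A]
    {f : A × A → ℝ} (hf : ∀ p, 0 ≤ f p) {a : ℝ}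
    (h : HasSum (fun m => ∑ p ∈ antidiagonal m, f p) a) : HasSum f a := by
  have hfiber (m : A) : HasSum (fun p : antidiagonal m => f p) (∑ p ∈ antidiagonal m, f p) :=
    (antidiagonal m).hasSum f
  have hsummable : Summable fun q : Σ m, antidiagonal m => f q.2 :=
    (summable_sigma_of_nonneg fun _ => hf _).mpr
      ⟨fun m => (hfiber m).summable, h.summable.congr fun m => ((hfiber m).tsum_eq).symm⟩
  exact HasAntidiagonal.sigmaAntidiagonalEquivProd.hasSum_iff.mp
    (h.sigma_of_hasSum hfiber hsummable)

theorem sum_antidiagonal_div_factorial_mul_factorial {K : Type*} [Field K] [CharZero K]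
    (g : ℕ → K) (m : ℕ) :
    ∑ p ∈ antidiagonal m, g (p.1 + p.2) / (p.1 ! * p.2 !) = g m * 2 ^ m / m ! := by
  have hterm : ∀ p ∈ antidiagonal m,
      g (p.1 + p.2) / (p.1 ! * p.2 !) = g m / m ! * (m.choose p.1 : K) := by
    rintro ⟨i, j⟩ hij
    rw [HasAntidiagonal.mem_antidiagonal] at hij
    subst hij
    have : ((i + j)! : K) ≠ 0 := Nat.cast_ne_zero.mpr (factorial_ne_zero _)
    rw [Nat.cast_add_choose]
    field_simp
  rw [sum_congr rfl hterm, ← mul_sum, ← Nat.cast_sum, Nat.sum_antidiagonal_eq_sum_range_succ_mk,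
    Nat.sum_range_choose]
  push_cast
  ring

theorem Real.hasSum_pow_div_factorial_s17 (z : ℝ) : HasSum (fun j => z ^ j / j !) (exp z) := by
  rw [exp_eq_exp_ℝ]
  exact NormedSpace.expSeries_div_hasSum_exp z

theorem Real.hasSum_mul_pow_div_factorial (z : ℝ) :
    HasSum (fun j => j * z ^ j / j !) (z * exp z) := by
  refine (hasSum_nat_add_iff' 1).mp ?_
  simp only [range_one, sum_singleton, CharP.cast_eq_zero, zero_mul, zero_div, sub_zero]
  refine ((hasSum_pow_div_factorial_s17 z).mul_left z).congr_fun fun j => ?_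
  rw [factorial_succ]
  push_cast
  field_simp
  ring

theorem Real.hasSum_sq_mul_pow_pred_div_factorial (z : ℝ) :
    HasSum (fun m : ℕ => (m : ℝ) ^ 2 * z ^ (m - 1) / m !) ((1 + z) * exp z) := by
  refine (hasSum_nat_add_iff' 1).mp ?_
  simp only [range_one, sum_singleton, CharP.cast_eq_zero, ne_eq, OfNat.ofNat_ne_zero,
    not_false_eq_true, zero_pow, zero_mul, zero_div, sub_zero, add_tsub_cancel_right]
  rw [add_mul, one_mul, add_comm]
  refine ((hasSum_mul_pow_div_factorial z).add (hasSum_pow_div_factorial_s17 z)).congr_fun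
    fun j => ?_
  rw [factorial_succ]
  push_cast
  field_simp

/-- `G_n(e₁;x) = x + 1/n` for the operator attached to the multiple
Sheffer polynomials `(k₁+k₂)·x^{k₁+k₂−1}`. -/
theorem Gkxk_e1 (x : ℝ) (hx : 0 ≤ x) (n : ℕ) (hn : 1 ≤ n) :
    Real.exp (-(n * x)) / 2 *
        ∑' k : ℕ × ℕ,
          (k.1 + k.2 : ℝ) * (n * x / 2) ^ (k.1 + k.2 - 1) /
            (k.1.factorial * k.2.factorial) * ((k.1 + k.2 : ℝ) / n) =
      x + 1 / n := by
  have hn0 : (n : ℝ) ≠ 0 := Nat.cast_ne_zero.mpr (by omega)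
  set z : ℝ := n * x
  set g : ℕ → ℝ := fun m => (m : ℝ) ^ 2 * (z / 2) ^ (m - 1) / n
  have hfiber (m : ℕ) : ∑ k ∈ antidiagonal m,
      (k.1 + k.2 : ℝ) * (z / 2) ^ (k.1 + k.2 - 1) / (k.1 ! * k.2 !) * ((k.1 + k.2 : ℝ) / n) =
        2 / n * ((m : ℝ) ^ 2 * z ^ (m - 1) / m !) := by
    calc _ = ∑ k ∈ antidiagonal m, g (k.1 + k.2) / (k.1 ! * k.2 !) :=
          sum_congr rfl fun k _ => by push_cast [g]; ring
      _ = g m * 2 ^ m / m ! := sum_antidiagonal_div_factorial_mul_factorial g m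
      _ = _ := by
        rcases m with _ | m
        · simp [g]
        · simp only [g, add_tsub_cancel_right, div_pow, pow_succ]
          field_simp
  have hseries : HasSum (fun k : ℕ × ℕ =>
      (k.1 + k.2 : ℝ) * (z / 2) ^ (k.1 + k.2 - 1) / (k.1 ! * k.2 !) * ((k.1 + k.2 : ℝ) / n))
      (2 / n * ((1 + z) * exp z)) :=
    hasSum_prod_of_hasSum_sum_antidiagonal (fun k => by positivity)
      (((hasSum_sq_mul_pow_pred_div_factorial z).mul_left (2 / n : ℝ)).congr_fun hfiber)
  rw [hseries.tsum_eq, exp_neg]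
  field_simp
  ring
end
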